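/- Let π be a permutation of length n and let A ⊆ B ⊆ {0,...,n}×{0,...,n}. Then the interval [π^A, π^B] in the mesh pattern poset is isomorphic as a poset to the boolean lattice of subsets of a set of size |B| − |A|, and consequently the Möbius function satisfies μ(π^A, π^B) = (−1)^{|B|−|A|}. -/

import Mathlib

/-!
# The poset of mesh patterns

A mesh pattern is a permutation of `{1, ..., len}` together with a set of shaded
boxes in the `(len+1) × (len+1)` grid (boxes are indexed by their south-west corner,
so boxes have coordinates in `{0, ..., len} × {0, ..., len}`).

We normalise the permutation as a function `ℕ → ℕ` (using 1-based indexing) which is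
`0` outside of `[1, len]`; this makes equality of mesh patterns coincide with equality
of the underlying data.
-/

structure MeshPattern where
  len : ℕ
  perm : ℕ → ℕ
  sh : Finset (ℕ × ℕ)
  perm_mem : ∀ i, 1 ≤ i → i ≤ len → 1 ≤ perm i ∧ perm i ≤ len
  perm_zero : ∀ i, i = 0 ∨ len < i → perm i = 0
  perm_inj : ∀ i j, 1 ≤ i → i ≤ len → 1 ≤ j → j ≤ len → perm i = perm j → i = j
  perm_surj : ∀ v, 1 ≤ v → v ≤ len → ∃ i, 1 ≤ i ∧ i ≤ len ∧ perm i = v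
  sh_mem : ∀ q ∈ sh, q.1 ≤ len ∧ q.2 ≤ len

namespace MeshPattern

/-- The (1-based) position of the value `v` in the underlying permutation of `m`. -/
noncomputable def pos (m : MeshPattern) (v : ℕ) : ℕ := Function.invFun m.perm v

/-- The dimension of a mesh pattern: length of the permutation plus number of shaded boxes. -/
def dim (m : MeshPattern) : ℕ := m.len + m.sh.card

/-- Given (the position map of an occurrence) `η` of `m` in `p`, the extended column
boundary map: pattern column boundary `i` (for `0 ≤ i ≤ m.len + 1`) is sent to the
corresponding column boundary in `p`.  Boxes of `p` with first coordinate `a` satisfying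
`colExt m p η i ≤ a < colExt m p η (i+1)` are exactly the boxes lying horizontally
within the region corresponding to pattern boxes with first coordinate `i`. -/
def colExt (m p : MeshPattern) (η : ℕ → ℕ) (i : ℕ) : ℕ :=
  if i = 0 then 0 else if i ≤ m.len then η i else p.len + 1

/-- The analogous extended row (value) boundary map. -/
noncomputable def valExt (m p : MeshPattern) (η : ℕ → ℕ) (j : ℕ) : ℕ :=
  if j = 0 then 0 else if j ≤ m.len then p.perm (η (m.pos j)) else p.len + 1

/-- The box `(a, b)` of `p` lies in the region `R_η(i, j)` of the box `(i, j)` of `m`. -/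
def inRegion (m p : MeshPattern) (η : ℕ → ℕ) (i j a b : ℕ) : Prop :=
  colExt m p η i ≤ a ∧ a < colExt m p η (i + 1) ∧
    valExt m p η j ≤ b ∧ b < valExt m p η (j + 1)

/-- The point of `p` at position `y` lies in the open interior of the region `R_η(i, j)`. -/
def interiorPt (m p : MeshPattern) (η : ℕ → ℕ) (i j y : ℕ) : Prop :=
  colExt m p η i < y ∧ y < colExt m p η (i + 1) ∧
    valExt m p η j < p.perm y ∧ p.perm y < valExt m p η (j + 1)

/-- `η` is an occurrence of the mesh pattern `m` in the mesh pattern `p`: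
a (normalised) strictly increasing choice of positions realising the underlying
classical pattern, such that for every shaded box of `m` the corresponding region of `p`
contains no point of `p` in its interior and consists entirely of shaded boxes of `p`. -/
structure IsOcc (m p : MeshPattern) (η : ℕ → ℕ) : Prop where
  zero : ∀ i, i = 0 ∨ m.len < i → η i = 0
  mem : ∀ i, 1 ≤ i → i ≤ m.len → 1 ≤ η i ∧ η i ≤ p.len
  mono : ∀ i j, 1 ≤ i → i < j → j ≤ m.len → η i < η j
  pattern : ∀ i j, 1 ≤ i → i ≤ m.len → 1 ≤ j → j ≤ m.len →
    (m.perm i < m.perm j ↔ p.perm (η i) < p.perm (η j))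
  no_point : ∀ q ∈ m.sh, ∀ y, 1 ≤ y → y ≤ p.len → ¬ interiorPt m p η q.1 q.2 y
  shaded : ∀ q ∈ m.sh, ∀ a b, inRegion m p η q.1 q.2 a b → (a, b) ∈ p.sh

/-- The mesh pattern poset: `m ≤ p` iff there is an occurrence of `m` in `p`. -/
instance : LE MeshPattern := ⟨fun m p => ∃ η, IsOcc m p η⟩

instance : LT MeshPattern := ⟨fun m p => m ≤ p ∧ m ≠ p⟩

/-- `b` covers `a` in the mesh pattern poset. -/
def CovByM (a b : MeshPattern) : Prop := a < b ∧ ¬ ∃ z, a < z ∧ z < b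

open Classical in
/-- The Möbius function of a (locally finite) partial order `r`, computed with a fuel
parameter: `muFuel r n a b` is the Möbius function `μ(a, b)` provided `n` is at least the
length of the longest chain from `a` to `b` (with the convention `μ(a, b) = 0` if
`¬ r a b`). -/
noncomputable def muFuel {α : Type*} (r : α → α → Prop) : ℕ → α → α → ℤ
  | 0, a, b => if a = b then 1 else 0
  | n + 1, a, b =>
      if a = b then 1
      else if r a b then - ∑ᶠ c ∈ {c | r a c ∧ r c b ∧ c ≠ b}, muFuel r n a c
      else 0

/-- The Möbius function of the mesh pattern poset.  Since every chain from `m` to `p` has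
length at most `dim p`, the fuel `dim p + 1` is sufficient, so this is the genuine Möbius
function: `mu m m = 1`, `mu m p = -∑_{m ≤ c < p} mu m c` for `m < p`, and `mu m p = 0`
when `m ≰ p`. -/
noncomputable def mu (m p : MeshPattern) : ℤ := muFuel (· ≤ ·) (p.dim + 1) m p

/-- The classical permutation poset `𝓟`, realised as the subposet of unshaded mesh
patterns (for unshaded patterns, mesh occurrence is exactly classical pattern
containment).  Its Möbius function. -/
noncomputable def muP (σ π : {m : MeshPattern // m.sh = ∅}) : ℤ :=
  muFuel (· ≤ ·) (π.1.len + 1) σ π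

/-- The mesh pattern with underlying identity permutation of length `n`
and shaded boxes `s`. -/
def ofId (n : ℕ) (s : Finset (ℕ × ℕ)) (hs : ∀ q ∈ s, q.1 ≤ n ∧ q.2 ≤ n) : MeshPattern where
  len := n
  perm := fun i => if 1 ≤ i ∧ i ≤ n then i else 0
  sh := s
  perm_mem := by intro i h1 h2; (try dsimp only); rw [if_pos ⟨h1, h2⟩]; omega
  perm_zero := by intro i h; (try dsimp only); rw [if_neg]; omega
  perm_inj := by intro i j h1 h2 h3 h4 h; (try dsimp only at h); rw [if_pos ⟨h1, h2⟩, if_pos ⟨h3, h4⟩] at h; omega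
  perm_surj := by
    intro v h1 h2; exact ⟨v, h1, h2, by (try dsimp only); rw [if_pos ⟨h1, h2⟩]⟩
  sh_mem := hs

/-- The mesh pattern with underlying decreasing permutation of length `n`
and shaded boxes `s`. -/
def ofRev (n : ℕ) (s : Finset (ℕ × ℕ)) (hs : ∀ q ∈ s, q.1 ≤ n ∧ q.2 ≤ n) : MeshPattern where
  len := n
  perm := fun i => if 1 ≤ i ∧ i ≤ n then n + 1 - i else 0
  sh := s
  perm_mem := by intro i h1 h2; (try dsimp only); rw [if_pos ⟨h1, h2⟩]; omega
  perm_zero := by intro i h; (try dsimp only); rw [if_neg]; omega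
  perm_inj := by intro i j h1 h2 h3 h4 h; (try dsimp only at h); rw [if_pos ⟨h1, h2⟩, if_pos ⟨h3, h4⟩] at h; omega
  perm_surj := by
    intro v h1 h2
    exact ⟨n + 1 - v, by omega, by omega, by (try dsimp only); rw [if_pos ⟨by omega, by omega⟩]; omega⟩
  sh_mem := hs

/-- The unshaded singleton mesh pattern `1^∅`. -/
def one0 : MeshPattern := ofId 1 ∅ (by simp)

/-- The empty mesh pattern `ε^∅`. -/
def eps0 : MeshPattern := ofId 0 ∅ (by simp)

/-- The empty mesh pattern `ε^{(0,0)}` with its single box shaded. -/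
def eps00 : MeshPattern := ofId 0 {(0, 0)} (by decide)

/-- The singleton mesh patterns `1^{(a,b)}` for `a b ∈ {0,1}`. -/
def one00 : MeshPattern := ofId 1 {(0, 0)} (by decide)
def one10 : MeshPattern := ofId 1 {(1, 0)} (by decide)
def one01 : MeshPattern := ofId 1 {(0, 1)} (by decide)
def one11 : MeshPattern := ofId 1 {(1, 1)} (by decide)

/-- The mesh pattern `21^{(0,0),(1,0)}`. -/
def pat21 : MeshPattern := ofRev 2 {(0, 0), (1, 0)} (by decide)

/-- Replace the shading of `p` by a subset `A ⊆ sh p` (same underlying permutation):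
this is the mesh pattern `(cl p)^A`. -/
def reshade (p : MeshPattern) (A : Finset (ℕ × ℕ)) (hA : A ⊆ p.sh) : MeshPattern :=
  { p with sh := A, sh_mem := fun q hq => p.sh_mem q (hA hq) }

/-- The occurrence `η` of `s` in `p` uses the shaded box `(a, b) ∈ sh p`. -/
def UsesBox (s p : MeshPattern) (η : ℕ → ℕ) (a b : ℕ) : Prop :=
  (a, b) ∈ p.sh ∧ ∃ i j, (i, j) ∈ s.sh ∧ inRegion s p η i j a b

/-- The position map of the occurrence of `p − x` in `p` avoiding the point at
position `x`. -/
def etaDel (p : MeshPattern) (x : ℕ) : ℕ → ℕ := fun i =>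
  if 1 ≤ i ∧ i ≤ p.len - 1 then (if i < x then i else i + 1) else 0

/-- The underlying permutation of the pattern obtained from `p` by deleting the point at
position `x`. -/
def delPerm (p : MeshPattern) (x : ℕ) : ℕ → ℕ := fun i =>
  if 1 ≤ i ∧ i ≤ p.len - 1 then
    (if p.perm (etaDel p x i) < p.perm x then p.perm (etaDel p x i)
     else p.perm (etaDel p x i) - 1)
  else 0

/-- `q` is the mesh pattern `p − x` obtained from `p` by deleting the point at position
`x` (where `1 ≤ x ≤ len p`): the underlying permutation is obtained by deleting that
letter, and a box of `q` is shaded exactly when the corresponding region of `p` (under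
the occurrence `etaDel p x`) is entirely shaded and contains no point of `p` in its
interior.  In particular `etaDel p x` is an occurrence of `q` in `p`. -/
def IsDeletion (p : MeshPattern) (x : ℕ) (q : MeshPattern) : Prop :=
  1 ≤ x ∧ x ≤ p.len ∧ q.len + 1 = p.len ∧ q.perm = delPerm p x ∧
    ∀ i j : ℕ, ((i, j) ∈ q.sh ↔ i ≤ q.len ∧ j ≤ q.len ∧
      (∀ a b, inRegion q p (etaDel p x) i j a b → (a, b) ∈ p.sh) ∧
      ∀ y, 1 ≤ y → y ≤ p.len → ¬ interiorPt q p (etaDel p x) i j y)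

/-- Deleting the point at position `x` of `p` (with `q = p − x`) merges shadings:
some shaded box of `q` corresponds to more than one shaded box of `p`. -/
def MergesShadings (p : MeshPattern) (x : ℕ) (q : MeshPattern) : Prop :=
  ∃ i j, (i, j) ∈ q.sh ∧ ∃ a b a' b', (a, b) ≠ (a', b') ∧ (a, b) ∈ p.sh ∧
    (a', b') ∈ p.sh ∧ inRegion q p (etaDel p x) i j a b ∧
    inRegion q p (etaDel p x) i j a' b'

/-- `f 0 ⋖ f 1 ⋖ ⋯ ⋖ f k` is a maximal chain of length `k` from `a` to `b`. -/
def IsMaxChain (a b : MeshPattern) (k : ℕ) (f : ℕ → MeshPattern) : Prop :=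
  f 0 = a ∧ f k = b ∧ ∀ i < k, CovByM (f i) (f (i + 1))

/-- Underlying permutation of the direct sum `s ⊕ t`. -/
def dsumPerm (s t : MeshPattern) : ℕ → ℕ := fun i =>
  if i ≤ s.len then s.perm i
  else if i ≤ s.len + t.len then t.perm (i - s.len) + s.len
  else 0

/-- Shading of the direct sum `s ⊕ t`: the shadings of `s` and of `t` (translated), where
boxes on the shared boundary are extended to the new boundary (north/east for boxes of
`s`, south/west for boxes of `t`). -/
def dsumSh (s t : MeshPattern) : Finset (ℕ × ℕ) :=
  s.sh ∪ t.sh.image (fun q => (q.1 + s.len, q.2 + s.len)) ∪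
    (s.sh.filter (fun q => q.2 = s.len)).biUnion
      (fun q => (Finset.range (t.len + 1)).image (fun k => (q.1, s.len + k))) ∪
    (s.sh.filter (fun q => q.1 = s.len)).biUnion
      (fun q => (Finset.range (t.len + 1)).image (fun k => (s.len + k, q.2))) ∪
    (t.sh.filter (fun q => q.2 = 0)).biUnion
      (fun q => (Finset.range (s.len + 1)).image (fun k => (q.1 + s.len, k))) ∪
    (t.sh.filter (fun q => q.1 = 0)).biUnion
      (fun q => (Finset.range (s.len + 1)).image (fun k => (k, q.2 + s.len)))

/-- `r = s ⊕ t` is the direct sum of the mesh patterns `s` and `t` (defined when the top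
right corner box of `s` and the bottom left corner box of `t` are not shaded). -/
def IsDSum (s t r : MeshPattern) : Prop :=
  (s.len, s.len) ∉ s.sh ∧ (0, 0) ∉ t.sh ∧
    r.len = s.len + t.len ∧ r.perm = dsumPerm s t ∧ r.sh = dsumSh s t

/-- A mesh pattern is indecomposable if it cannot be written as a direct sum `a ⊕ b`
with neither `a` nor `b` equal to it. -/
def Indecomposable (m : MeshPattern) : Prop :=
  ¬ ∃ s t, s ≠ m ∧ t ≠ m ∧ IsDSum s t m

/-- `SumOfList L m`: `m` is the direct sum of the list `L` of mesh patterns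
(the empty list summing to the empty pattern `ε^∅`). -/
def SumOfList : List MeshPattern → MeshPattern → Prop
  | [], m => m.len = 0 ∧ m.sh = ∅
  | [a], m => a = m
  | a :: b :: rest, m => ∃ r, SumOfList (b :: rest) r ∧ IsDSum a r m

/-- Underlying permutation of the skew sum `s ⊖ t`. -/
def sksumPerm (s t : MeshPattern) : ℕ → ℕ := fun i =>
  if i = 0 then 0
  else if i ≤ s.len then s.perm i + t.len
  else if i ≤ s.len + t.len then t.perm (i - s.len)
  else 0

/-- Shading of the skew sum `s ⊖ t` (s placed to the north west of `t`), with boxes on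
the shared boundary extended to the new boundary. -/
def sksumSh (s t : MeshPattern) : Finset (ℕ × ℕ) :=
  s.sh.image (fun q => (q.1, q.2 + t.len)) ∪ t.sh.image (fun q => (q.1 + s.len, q.2)) ∪
    (s.sh.filter (fun q => q.1 = s.len)).biUnion
      (fun q => (Finset.range (t.len + 1)).image (fun k => (s.len + k, q.2 + t.len))) ∪
    (s.sh.filter (fun q => q.2 = 0)).biUnion
      (fun q => (Finset.range (t.len + 1)).image (fun k => (q.1, k))) ∪
    (t.sh.filter (fun q => q.2 = t.len)).biUnion
      (fun q => (Finset.range (s.len + 1)).image (fun k => (q.1 + s.len, t.len + k))) ∪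
    (t.sh.filter (fun q => q.1 = 0)).biUnion
      (fun q => (Finset.range (s.len + 1)).image (fun k => (k, q.2)))

/-- `r = s ⊖ t` is the skew sum of the mesh patterns `s` and `t` (defined when the bottom
right corner box of `s` and the top left corner box of `t` are not shaded). -/
def IsSkewSum (s t r : MeshPattern) : Prop :=
  (s.len, 0) ∉ s.sh ∧ (0, t.len) ∉ t.sh ∧
    r.len = s.len + t.len ∧ r.perm = sksumPerm s t ∧ r.sh = sksumSh s t

/-- A mesh pattern is skew-indecomposable if it cannot be written as a skew sum `a ⊖ b`
with neither `a` nor `b` equal to it. -/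
def SkewIndecomposable (m : MeshPattern) : Prop :=
  ¬ ∃ s t, s ≠ m ∧ t ≠ m ∧ IsSkewSum s t m

/-- Connectivity (zig-zag of comparabilities) inside a subset `I` of the mesh pattern
poset. -/
def ConnIn (I : Set MeshPattern) (a b : MeshPattern) : Prop :=
  Relation.ReflTransGen (fun u v => u ∈ I ∧ v ∈ I ∧ (u ≤ v ∨ v ≤ u)) a b

/-- The interval `[m, p]` is strongly disconnected: its open interior has at least two
connected components each containing more than one element. -/
def StronglyDisconnectedInterval (m p : MeshPattern) : Prop :=
  ∃ a b, (m < a ∧ a < p) ∧ (m < b ∧ b < p) ∧ ¬ ConnIn {c | m < c ∧ c < p} a b ∧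
    (∃ a', (m < a' ∧ a' < p) ∧ a' ≠ a ∧ ConnIn {c | m < c ∧ c < p} a a') ∧
    (∃ b', (m < b' ∧ b' < p) ∧ b' ≠ b ∧ ConnIn {c | m < c ∧ c < p} b b')

/-- The occurrence of `m` in `m ⊕ m` (or `m ⊖ m`) as the first `|m|` points. -/
def eta1 (m : MeshPattern) : ℕ → ℕ := fun i => if 1 ≤ i ∧ i ≤ m.len then i else 0

/-- The occurrence of `m` in `m ⊕ m` (or `m ⊖ m`) as the last `|m|` points. -/
def eta2 (m : MeshPattern) : ℕ → ℕ := fun i => if 1 ≤ i ∧ i ≤ m.len then i + m.len else 0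

/-- `i` (with `2 ≤ i ≤ len`) is the position of an adjacency tail: the letter at
position `i` differs by one from the letter at position `i - 1`. -/
def IsAdjTail (m : MeshPattern) (i : ℕ) : Prop :=
  2 ≤ i ∧ i ≤ m.len ∧ (m.perm i = m.perm (i - 1) + 1 ∨ m.perm (i - 1) = m.perm i + 1)

open Classical in
/-- `adj(cl m)`: the number of adjacency tails of the underlying permutation of `m`. -/
noncomputable def adjCount (m : MeshPattern) : ℕ :=
  ((Finset.range (m.len + 1)).filter (fun i => IsAdjTail m i)).card

/-- The total number of mesh patterns of length `n`. -/
def Tcount (n : ℕ) : ℕ := n.factorial * 2 ^ ((n + 1) ^ 2)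

end MeshPattern

/-- Binary words, partially ordered by (not necessarily contiguous) subword containment:
the poset `𝓦`. -/
structure Word where
  toList : List Bool

instance : LE Word := ⟨fun u w => u.toList.Sublist w.toList⟩

/-- The binary word associated to a mesh pattern `m` in the class `Γ`: it has length
`|m| - 1`, and for each letter `i` with `2 ≤ i ≤ |m|` the corresponding entry is
`false` (i.e. `0`) if the letter `i` appears before the letter `1` in `cl m`,
and `true` (i.e. `1`) otherwise. -/
noncomputable def MeshPattern.wordOf (m : MeshPattern) : List Bool :=
  (List.range (m.len - 1)).map (fun k => if m.pos (k + 2) < m.pos 1 then false else true)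

/-!
Two mesh patterns of the same length can only be compared through the identity occurrence, so
for them `m ≤ p` just says that they share the permutation and `sh m ⊆ sh p`. Every pattern of
`[π^A, π^B]` therefore has the length of `π`, hence is `π^(A ∪ v)` for a unique `v ⊆ B \ A`, and
`v ↦ π^(A ∪ v)` is an order isomorphism from the boolean lattice on `B \ A` onto the interval.
The Möbius value `(-1) ^ |B \ A|` follows by induction on `|B \ A|`, from the vanishing of
`∑_{A ⊆ u ⊆ S} (-1) ^ |u \ A|` for `A ≠ S`.
-/

open Finset

theorem Finset.sum_Icc_neg_one_pow_card_sub {ι : Type*} [DecidableEq ι] {s t : Finset ι}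
    (hst : s ⊆ t) (hne : s ≠ t) : ∑ u ∈ Icc s t, (-1 : ℤ) ^ (#u - #s) = 0 := by
  have hdisj : ∀ v ∈ (t \ s).powerset, Disjoint s v := fun v hv =>
    disjoint_of_subset_right (mem_powerset.1 hv) disjoint_sdiff
  rw [Icc_eq_image_powerset hst, sum_image fun v hv w hw h => by
    rw [← union_sdiff_cancel_left (hdisj v hv), h, union_sdiff_cancel_left (hdisj w hw)]]
  rw [sum_congr rfl fun v hv => by
    rw [card_union_of_disjoint (hdisj v hv), Nat.add_sub_cancel_left]]
  exact sum_powerset_neg_one_pow_card_of_nonempty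
    (sdiff_nonempty.2 fun hts => hne (hst.antisymm hts))

theorem Finset.union_map_subtype_subset {α : Type*} [DecidableEq α] {s t : Finset α}
    (hst : s ⊆ t) (v : Finset {x // x ∈ t \ s}) : s ∪ v.map (Function.Embedding.subtype _) ⊆ t :=
  union_subset hst fun x hx => by
    obtain ⟨y, -, rfl⟩ := mem_map.1 hx
    exact (mem_sdiff.1 y.2).1

theorem Function.injective_of_rel_iff_le {α β : Type*} [PartialOrder β] {r : α → α → Prop}
    {f : β → α} (hf : ∀ x y, r (f x) (f y) ↔ x ≤ y) : Function.Injective f := fun x y h =>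
  le_antisymm ((hf x y).1 (h ▸ (hf y y).2 le_rfl)) ((hf y x).1 (h ▸ (hf y y).2 le_rfl))

noncomputable def orderIsoOfLEIff {α β : Type*} [LE α] [PartialOrder β] [BoundedOrder β]
    (f : β → α) (hf : ∀ x y, f x ≤ f y ↔ x ≤ y)
    (hsurj : ∀ c, f ⊥ ≤ c → c ≤ f ⊤ → ∃ x, f x = c) {a b : α} (ha : f ⊥ = a) (hb : f ⊤ = b) :
    {c // a ≤ c ∧ c ≤ b} ≃o β :=
  let g : β ↪o {c // a ≤ c ∧ c ≤ b} :=
    { toFun := fun x => ⟨f x, ha ▸ (hf ⊥ x).2 bot_le, hb ▸ (hf x ⊤).2 le_top⟩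
      inj' := fun x y h => Function.injective_of_rel_iff_le hf (congrArg Subtype.val h)
      map_rel_iff' := hf _ _ }
  (RelIso.ofSurjective g fun c => by
    obtain ⟨x, hx⟩ := hsurj c.1 (ha ▸ c.2.1) (hb ▸ c.2.2)
    exact ⟨x, Subtype.ext hx⟩).symm

def Equiv.finsetOrderIso {α β : Type*} (e : α ≃ β) : Finset α ≃o Finset β where
  toEquiv := e.finsetCongr
  map_rel_iff' := map_subset_map

namespace MeshPattern

theorem muFuel_eq_neg_one_pow_card_sub {α ι : Type*} [DecidableEq ι] {r : α → α → Prop}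
    {f : Finset ι → α} (hf : ∀ s t, r (f s) (f t) ↔ s ⊆ t)
    (hsurj : ∀ s t c, r (f s) c → r c (f t) → ∃ u, f u = c) {n : ℕ} {s t : Finset ι}
    (hst : s ⊆ t) (hn : #t - #s < n) : muFuel r n (f s) (f t) = (-1) ^ (#t - #s) := by
  induction n generalizing t with
  | zero => omega
  | succ n ih =>
    have hinj : Function.Injective f := Function.injective_of_rel_iff_le hf
    rcases eq_or_ne s t with rfl | hne
    · simp [muFuel]
    have hIco : {c | r (f s) c ∧ r c (f t) ∧ c ≠ f t} = f '' ↑(Ico s t) := by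
      ext c
      constructor
      · rintro ⟨hsc, hct, hne⟩
        obtain ⟨u, rfl⟩ := hsurj s t c hsc hct
        exact ⟨u, mem_Ico.2 ⟨(hf s u).1 hsc, ssubset_of_subset_of_ne ((hf u t).1 hct)
          (mt (congrArg f) hne)⟩, rfl⟩
      · rintro ⟨u, hu, rfl⟩
        obtain ⟨hsu, hut⟩ := mem_Ico.1 hu
        exact ⟨(hf s u).2 hsu, (hf u t).2 hut.le, hinj.ne hut.ne⟩
    have hsum : ∑ u ∈ Ico s t, muFuel r n (f s) (f u) = ∑ u ∈ Ico s t, (-1 : ℤ) ^ (#u - #s) :=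
      sum_congr rfl fun u hu => by
        obtain ⟨hsu, hut⟩ := mem_Ico.1 hu
        have := card_lt_card hut
        have := card_le_card hsu
        exact ih hsu (by omega)
    have hIcc := sum_Icc_neg_one_pow_card_sub hst hne
    rw [Icc_eq_cons_Ico hst, sum_cons] at hIcc
    rw [muFuel, if_neg (hinj.ne hne), if_pos ((hf s t).2 hst), hIco,
      finsum_mem_image hinj.injOn, finsum_mem_coe_finset, hsum]
    linarith

protected theorem ext {m p : MeshPattern} (hlen : m.len = p.len) (hperm : m.perm = p.perm)
    (hsh : m.sh = p.sh) : m = p := by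
  cases m; cases p; cases hlen; cases hperm; cases hsh; rfl

theorem pos_spec (m : MeshPattern) {v : ℕ} (h1 : 1 ≤ v) (h2 : v ≤ m.len) :
    1 ≤ m.pos v ∧ m.pos v ≤ m.len ∧ m.perm (m.pos v) = v := by
  obtain ⟨i, -, -, hi⟩ := m.perm_surj v h1 h2
  have hv : m.perm (m.pos v) = v := Function.invFun_eq ⟨i, hi⟩
  have hne : m.perm (m.pos v) ≠ 0 := by omega
  exact ⟨by by_contra; exact hne (m.perm_zero _ (by omega)),
    by by_contra; exact hne (m.perm_zero _ (by omega)), hv⟩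

theorem colExt_eta1 {m p : MeshPattern} (hlen : m.len = p.len) {i : ℕ} (hi : i ≤ m.len + 1) :
    colExt m p (eta1 m) i = i := by
  unfold colExt eta1
  split_ifs <;> omega

theorem valExt_eta1 {m p : MeshPattern} (hlen : m.len = p.len) (hperm : m.perm = p.perm)
    {j : ℕ} (hj : j ≤ m.len + 1) : valExt m p (eta1 m) j = j := by
  unfold valExt
  split_ifs with h0 hle
  · omega
  · obtain ⟨hp1, hp2, hp3⟩ := m.pos_spec (v := j) (by omega) hle
    rw [eta1, if_pos ⟨hp1, hp2⟩, ← hperm, hp3]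
  · omega

theorem inRegion_eta1_iff {m p : MeshPattern} (hlen : m.len = p.len) (hperm : m.perm = p.perm)
    {i j a b : ℕ} (hi : i ≤ m.len) (hj : j ≤ m.len) :
    inRegion m p (eta1 m) i j a b ↔ a = i ∧ b = j := by
  rw [inRegion, colExt_eta1 hlen (by omega), colExt_eta1 hlen (by omega),
    valExt_eta1 hlen hperm (by omega), valExt_eta1 hlen hperm (by omega)]
  omega

theorem isOcc_eta1 {m p : MeshPattern} (hlen : m.len = p.len) (hperm : m.perm = p.perm)
    (hsh : m.sh ⊆ p.sh) : IsOcc m p (eta1 m) where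
  zero i hi := by rw [eta1, if_neg (by omega)]
  mem i hi1 hi2 := by rw [eta1, if_pos ⟨hi1, hi2⟩]; omega
  mono i j hi hij hj := by rw [eta1, eta1, if_pos ⟨hi, by omega⟩, if_pos ⟨by omega, hj⟩]; exact hij
  pattern i j hi1 hi2 hj1 hj2 := by rw [eta1, eta1, if_pos ⟨hi1, hi2⟩, if_pos ⟨hj1, hj2⟩, hperm]
  no_point q hq y _ _ hy := by
    obtain ⟨hi, -⟩ := m.sh_mem q hq
    have h1 := hy.1
    have h2 := hy.2.1
    rw [colExt_eta1 hlen (by omega)] at h1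
    rw [colExt_eta1 hlen (by omega)] at h2
    omega
  shaded q hq a b hab := by
    obtain ⟨hi, hj⟩ := m.sh_mem q hq
    obtain ⟨rfl, rfl⟩ := (inRegion_eta1_iff hlen hperm hi hj).1 hab
    exact hsh hq

theorem IsOcc.le_apply {m p : MeshPattern} {η : ℕ → ℕ} (h : IsOcc m p η) {i : ℕ} (hi1 : 1 ≤ i)
    (hi2 : i ≤ m.len) : i ≤ η i := by
  induction i with
  | zero => omega
  | succ i ih =>
    rcases Nat.eq_zero_or_pos i with rfl | hi
    · exact (h.mem 1 le_rfl hi2).1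
    · have := ih hi (by omega)
      have := h.mono i (i + 1) hi (by omega) hi2
      omega

theorem IsOcc.apply_add_le {m p : MeshPattern} {η : ℕ → ℕ} (h : IsOcc m p η) {i : ℕ}
    (hi1 : 1 ≤ i) (hi2 : i ≤ m.len) : η i + (m.len - i) ≤ p.len := by
  induction hk : m.len - i generalizing i with
  | zero => have := (h.mem i hi1 hi2).2; omega
  | succ k ih =>
    have := ih (i := i + 1) (by omega) (by omega) (by omega)
    have := h.mono i (i + 1) hi1 (by omega) (by omega)
    omega

theorem len_le_of_le {m p : MeshPattern} (h : m ≤ p) : m.len ≤ p.len := by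
  obtain ⟨η, hη⟩ := h
  rcases Nat.eq_zero_or_pos m.len with h0 | h0
  · omega
  · have := hη.apply_add_le h0 le_rfl
    have := hη.le_apply h0 le_rfl
    omega

theorem IsOcc.eq_eta1 {m p : MeshPattern} {η : ℕ → ℕ} (h : IsOcc m p η) (hlen : m.len = p.len) :
    η = eta1 m := by
  funext i
  by_cases hi : 1 ≤ i ∧ i ≤ m.len
  · have := h.le_apply hi.1 hi.2
    have := h.apply_add_le hi.1 hi.2
    rw [eta1, if_pos hi]
    omega
  · rw [eta1, if_neg hi]
    exact h.zero i (by omega)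

theorem perm_eq_card_filter_le (m : MeshPattern) {i : ℕ} (h1 : 1 ≤ i) (h2 : i ≤ m.len) :
    m.perm i = #{j ∈ Icc 1 m.len | m.perm j ≤ m.perm i} := by
  have himg : {j ∈ Icc 1 m.len | m.perm j ≤ m.perm i}.image m.perm = Icc 1 (m.perm i) := by
    ext v
    simp only [mem_image, mem_filter, mem_Icc]
    constructor
    · rintro ⟨j, ⟨⟨hj1, hj2⟩, hle⟩, rfl⟩
      exact ⟨(m.perm_mem j hj1 hj2).1, hle⟩
    · rintro ⟨hv1, hv2⟩
      obtain ⟨j, hj1, hj2, rfl⟩ := m.perm_surj v hv1 (hv2.trans (m.perm_mem i h1 h2).2)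
      exact ⟨j, ⟨⟨hj1, hj2⟩, hv2⟩, rfl⟩
  have hinj : Set.InjOn m.perm ({j ∈ Icc 1 m.len | m.perm j ≤ m.perm i} : Finset ℕ) := by
    intro x hx y hy hxy
    simp only [coe_filter, mem_Icc, Set.mem_ofPred_eq] at hx hy
    exact m.perm_inj x y hx.1.1 hx.1.2 hy.1.1 hy.1.2 hxy
  rw [← card_image_of_injOn hinj, himg, Nat.card_Icc, Nat.add_sub_cancel]

theorem perm_eq_of_lt_iff_lt {m p : MeshPattern} (hlen : m.len = p.len)
    (h : ∀ i j, 1 ≤ i → i ≤ m.len → 1 ≤ j → j ≤ m.len →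
      (m.perm i < m.perm j ↔ p.perm i < p.perm j)) : m.perm = p.perm := by
  funext i
  by_cases hi : 1 ≤ i ∧ i ≤ m.len
  · rw [m.perm_eq_card_filter_le hi.1 hi.2, p.perm_eq_card_filter_le hi.1 (hlen ▸ hi.2), ← hlen]
    refine congrArg card (filter_congr fun j hj => ?_)
    obtain ⟨hj1, hj2⟩ := mem_Icc.1 hj
    simpa only [not_lt] using not_congr (h i j hi.1 hi.2 hj1 hj2)
  · rw [m.perm_zero i (by omega), p.perm_zero i (by omega)]

theorem le_iff_of_len_eq {m p : MeshPattern} (hlen : m.len = p.len) :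
    m ≤ p ↔ m.perm = p.perm ∧ m.sh ⊆ p.sh := by
  refine ⟨fun ⟨η, hη⟩ => ?_, fun ⟨hperm, hsh⟩ => ⟨eta1 m, isOcc_eta1 hlen hperm hsh⟩⟩
  obtain rfl := hη.eq_eta1 hlen
  have hperm : m.perm = p.perm := perm_eq_of_lt_iff_lt hlen fun i j hi1 hi2 hj1 hj2 => by
    simpa only [eta1, if_pos (And.intro hi1 hi2), if_pos (And.intro hj1 hj2)] using
      hη.pattern i j hi1 hi2 hj1 hj2
  refine ⟨hperm, fun q hq => ?_⟩
  obtain ⟨hi, hj⟩ := m.sh_mem q hq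
  exact hη.shaded q hq q.1 q.2 ((inRegion_eta1_iff hlen hperm hi hj).2 ⟨rfl, rfl⟩)

/-- `π^(A ∪ v)`: subsets `v` of `sh p \ A` parametrise the interval `[π^A, p]`. -/
def reshadeUnion (p : MeshPattern) (A : Finset (ℕ × ℕ)) (hA : A ⊆ p.sh)
    (v : Finset {x // x ∈ p.sh \ A}) : MeshPattern :=
  p.reshade (A ∪ v.map (Function.Embedding.subtype _)) (union_map_subtype_subset hA v)

section reshadeUnion

variable {p : MeshPattern} {A : Finset (ℕ × ℕ)} (hA : A ⊆ p.sh)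

theorem reshadeUnion_le_iff {v w : Finset {x // x ∈ p.sh \ A}} :
    p.reshadeUnion A hA v ≤ p.reshadeUnion A hA w ↔ v ⊆ w := by
  rw [le_iff_of_len_eq (m := p.reshadeUnion A hA v) (p := p.reshadeUnion A hA w) rfl]
  simp only [reshadeUnion, reshade, true_and]
  refine ⟨fun h x hx => ?_, fun h => union_subset_union_right (map_subset_map.2 h)⟩
  rcases mem_union.1 (h (mem_union_right A (mem_map_of_mem _ hx))) with hxA | hxw
  · exact absurd hxA (mem_sdiff.1 x.2).2
  · obtain ⟨y, hy, hyx⟩ := mem_map.1 hxw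
    rwa [← Subtype.ext hyx]

theorem reshadeUnion_empty : p.reshadeUnion A hA ∅ = p.reshade A hA :=
  MeshPattern.ext rfl rfl (by simp [reshadeUnion, reshade])

theorem reshadeUnion_univ : p.reshadeUnion A hA univ = p := by
  refine MeshPattern.ext rfl rfl ?_
  ext x
  simp only [reshadeUnion, reshade, mem_union, mem_map, mem_univ, true_and,
    Function.Embedding.coe_subtype]
  constructor
  · rintro (hxA | ⟨y, rfl⟩)
    exacts [hA hxA, (mem_sdiff.1 y.2).1]
  · intro hx
    by_cases hxA : x ∈ A
    exacts [Or.inl hxA, Or.inr ⟨⟨x, mem_sdiff.2 ⟨hx, hxA⟩⟩, rfl⟩]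

theorem exists_reshadeUnion_eq {v w : Finset {x // x ∈ p.sh \ A}} {c : MeshPattern}
    (hvc : p.reshadeUnion A hA v ≤ c) (hcw : c ≤ p.reshadeUnion A hA w) :
    ∃ u, p.reshadeUnion A hA u = c := by
  have hlen : c.len = p.len := le_antisymm (len_le_of_le hcw :) (len_le_of_le hvc :)
  obtain ⟨-, hAc⟩ := (le_iff_of_len_eq (m := p.reshadeUnion A hA v) hlen.symm).1 hvc
  obtain ⟨hperm, hcp⟩ := (le_iff_of_len_eq (p := p.reshadeUnion A hA w) hlen).1 hcw
  refine ⟨({x | x.1 ∈ c.sh} : Finset {x // x ∈ p.sh \ A}), MeshPattern.ext hlen.symm hperm.symm ?_⟩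
  ext x
  simp only [reshadeUnion, reshade, mem_union, mem_map, mem_filter, mem_univ, true_and,
    Function.Embedding.coe_subtype]
  constructor
  · rintro (hxA | ⟨y, hy, rfl⟩)
    exacts [hAc (subset_union_left hxA), hy]
  · intro hx
    by_cases hxA : x ∈ A
    · exact .inl hxA
    · exact .inr ⟨⟨x, mem_sdiff.2 ⟨union_map_subtype_subset hA w (hcp hx), hxA⟩⟩, hx, rfl⟩

end reshadeUnion

/-- The interval `[π^A, π^B]` (here `B = sh p` and `π^B = p`) is isomorphic to the
boolean lattice of subsets of a set of size `|B| - |A|`, and consequently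
`μ(π^A, π^B) = (-1) ^ (|B| - |A|)`. -/
theorem interval_same_perm_boolean (p : MeshPattern) (A : Finset (ℕ × ℕ)) (hA : A ⊆ p.sh) :
    Nonempty ({c : MeshPattern // p.reshade A hA ≤ c ∧ c ≤ p} ≃o
      Finset (Fin (p.sh.card - A.card))) ∧
    mu (p.reshade A hA) p = (-1) ^ (p.sh.card - A.card) := by
  have hcard : Fintype.card {x // x ∈ p.sh \ A} = p.sh.card - A.card := by
    rw [Fintype.card_coe, card_sdiff_of_subset hA]
  have hle : ∀ v w, p.reshadeUnion A hA v ≤ p.reshadeUnion A hA w ↔ v ⊆ w :=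
    fun _ _ => reshadeUnion_le_iff hA
  have hsurj : ∀ v w c, p.reshadeUnion A hA v ≤ c → c ≤ p.reshadeUnion A hA w →
      ∃ u, p.reshadeUnion A hA u = c := fun _ _ _ => exists_reshadeUnion_eq hA
  refine ⟨⟨(orderIsoOfLEIff _ hle (hsurj ⊥ ⊤) (reshadeUnion_empty hA)
      (reshadeUnion_univ hA)).trans (Fintype.equivFinOfCardEq hcard).finsetOrderIso⟩, ?_⟩
  have hmu := muFuel_eq_neg_one_pow_card_sub hle hsurj (empty_subset univ) (n := p.dim + 1)
    (by rw [card_univ, hcard, dim]; omega)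
  rwa [reshadeUnion_empty, reshadeUnion_univ, card_univ, hcard, card_empty, Nat.sub_zero] at hmu

end MeshPattern
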